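/- Let Λ, β, α, μ₁, μ₂, d₁, d₂ > 0, θ ∈ ℝ, c > 0, and let (S*, I*) be a positive endemic equilibrium, i.e. S* > 0, I* > 0, Λ = βS*I*/(1 + αI*) + μ₁S* and βS*I*/(1 + αI*) = μ₂I*. Suppose S, I : ℝ → ℝ are differentiable with S(ξ) > 0 and I(ξ) > 0 for all ξ, solving the traveling-wave system cS'(ξ) = d₁𝔍[S](ξ) + Λ − βS(ξ)I(ξ)/(1 + αI(ξ)) − μ₁S(ξ), cI'(ξ) = d₂𝔍[I](ξ) + βS(ξ)I(ξ)/(1 + αI(ξ)) − μ₂I(ξ). With g(x) = x − 1 − ln x, define L(ξ) = cS*g(S(ξ)/S*) + cI*g(I(ξ)/I*) + d₁S*(V₁(ξ) + V₂(ξ)) + d₂I*(U₁(ξ) + U₂(ξ)), where V₁(ξ) = ∫₀^{sin θ} g(S(ξ − ς)/S*) dς − ∫_{−sin θ}^{0} g(S(ξ − ς)/S*) dς, V₂ is defined analogously with cos θ, and U₁, U₂ are defined analogously with I and I* in place of S and S*. Then L is differentiable and L'(ξ) ≤ 0 for every ξ ∈ ℝ. -/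

import Mathlib

/-- Discrete Laplacian in direction `θ`. -/
noncomputable def lap (θ : ℝ) (φ : ℝ → ℝ) (ξ : ℝ) : ℝ :=
  φ (ξ + Real.sin θ) + φ (ξ - Real.sin θ) + φ (ξ + Real.cos θ) + φ (ξ - Real.cos θ) - 4 * φ ξ

/-- The Volterra–Lyapunov function `g(x) = x − 1 − ln x`. -/
noncomputable def volterraG (x : ℝ) : ℝ := x - 1 - Real.log x

/-
Each species contributes `c s* g(φ/s*)` plus the nonlocal terms `d s* (V₁ + V₂)`, whose derivative
is `-d s* 𝔍[g(φ/s*)]`. By convexity of `g` (tangent-line inequality at `φ(ξ)/s*`), this dominates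
the diffusion contribution `(1 - s*/φ) d 𝔍[φ]` coming from `c (s* g(φ/s*))' = (1 - s*/φ) c φ'`.
What remains is the reaction part, which at the endemic equilibrium is, after clearing
denominators, minus a sum of squares and of an AM-GM defect.
-/

open Real

theorem hasDerivAt_volterraG {x : ℝ} (hx : x ≠ 0) : HasDerivAt volterraG (1 - x⁻¹) x :=
  ((hasDerivAt_id x).sub_const 1).sub (hasDerivAt_log hx)

theorem continuous_volterraG_comp {φ : ℝ → ℝ} (hφ : Continuous φ) (hpos : ∀ x, φ x ≠ 0) :
    Continuous fun x => volterraG (φ x) :=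
  (hφ.sub continuous_const).sub (hφ.log hpos)

theorem volterraG_tangent_le {u v : ℝ} (hu : 0 < u) (hv : 0 < v) :
    (1 - 1 / u) * (v - u) ≤ volterraG v - volterraG u := by
  have hlog := log_le_sub_one_of_pos (div_pos hv hu)
  rw [log_div hv.ne' hu.ne'] at hlog
  rw [show (1 - 1 / u) * (v - u) = (v - u) - (v / u - 1) by field_simp]
  unfold volterraG
  linarith

theorem volterraG_div_tangent_le {s u v : ℝ} (hs : 0 < s) (hu : 0 < u) (hv : 0 < v) :
    (1 - s / u) * (v - u) ≤ s * (volterraG (v / s) - volterraG (u / s)) := by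
  have h := mul_le_mul_of_nonneg_left (volterraG_tangent_le (div_pos hu hs) (div_pos hv hs)) hs.le
  have e : s * ((1 - 1 / (u / s)) * (v / s - u / s)) = (1 - s / u) * (v - u) := by
    field_simp
  rwa [e] at h

theorem one_sub_div_mul_lap_le {s θ ξ : ℝ} {φ : ℝ → ℝ} (hs : 0 < s) (hφ : ∀ x, 0 < φ x) :
    (1 - s / φ ξ) * lap θ φ ξ ≤ s * lap θ (fun x => volterraG (φ x / s)) ξ := by
  have h₁ := volterraG_div_tangent_le hs (hφ ξ) (hφ (ξ + sin θ))
  have h₂ := volterraG_div_tangent_le hs (hφ ξ) (hφ (ξ - sin θ))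
  have h₃ := volterraG_div_tangent_le hs (hφ ξ) (hφ (ξ + cos θ))
  have h₄ := volterraG_div_tangent_le hs (hφ ξ) (hφ (ξ - cos θ))
  unfold lap
  linear_combination h₁ + h₂ + h₃ + h₄

theorem three_mul_mul_le {x y z : ℝ} (hx : 0 < x) (hy : 0 < y) (hz : 0 < z) :
    3 * x * y * z ≤ x ^ 2 * z + x * y ^ 2 + y * z ^ 2 := by
  nlinarith [mul_nonneg hz.le (sq_nonneg (x - y)), mul_nonneg hx.le (sq_nonneg (y - z)),
    mul_nonneg hy.le (sq_nonneg (z - x)), mul_pos hx hy, mul_pos hy hz, mul_pos hx hz]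

theorem endemic_reaction_nonpos {Λ β α μ₁ μ₂ Sstar Istar s i : ℝ}
    (hβ : 0 ≤ β) (hα : 0 ≤ α) (hμ₁ : 0 ≤ μ₁) (hSstar : 0 < Sstar) (hIstar : 0 < Istar)
    (hs : 0 < s) (hi : 0 < i)
    (heq1 : Λ = β * Sstar * Istar / (1 + α * Istar) + μ₁ * Sstar)
    (heq2 : β * Sstar * Istar / (1 + α * Istar) = μ₂ * Istar) :
    (1 - Sstar / s) * (Λ - β * s * i / (1 + α * i) - μ₁ * s)
      + (1 - Istar / i) * (β * s * i / (1 + α * i) - μ₂ * i) ≤ 0 := by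
  have hpi : 0 < 1 + α * i := by positivity
  have hpI : 0 < 1 + α * Istar := by positivity
  have hμ₂ : μ₂ = β * Sstar / (1 + α * Istar) := by
    field_simp at heq2 ⊢
    nlinarith [heq2]
  subst heq1 hμ₂
  have hamgm : 0 ≤ s ^ 2 * Istar ^ 2 + i * Istar * Sstar ^ 2 + s * Sstar * i ^ 2
      - 3 * s * Sstar * i * Istar := by
    have h := three_mul_mul_le (mul_pos hs hIstar) (mul_pos hSstar hi) (mul_pos hs hi)
    nlinarith [mul_pos hs hi]
  rw [← mul_le_mul_iff_of_pos_right (by positivity : 0 < s * i * (1 + α * i) * (1 + α * Istar)),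
    zero_mul]
  calc _ = -(μ₁ * i * (1 + α * i) * (1 + α * Istar) * (s - Sstar) ^ 2
          + β * i * (Istar * (s - Sstar) ^ 2 + α * (s ^ 2 * Istar ^ 2 + i * Istar * Sstar ^ 2
            + s * Sstar * i ^ 2 - 3 * s * Sstar * i * Istar))) := by
        field_simp
        ring
    _ ≤ 0 := by
      rw [neg_nonpos]
      positivity

theorem hasDerivAt_integral_comp_sub {E : Type*} [NormedAddCommGroup E] [NormedSpace ℝ E]
    [CompleteSpace E] {F : ℝ → E} (hF : Continuous F) (a b x : ℝ) :
    HasDerivAt (fun x => ∫ ς in a..b, F (x - ς)) (F (x - a) - F (x - b)) x := by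
  have e : (fun x => ∫ ς in a..b, F (x - ς))
      = fun x => (∫ t in (0 : ℝ)..x - a, F t) - ∫ t in (0 : ℝ)..x - b, F t := by
    funext x
    rw [intervalIntegral.integral_comp_sub_left,
      intervalIntegral.integral_interval_sub_left (hF.intervalIntegrable _ _)
        (hF.intervalIntegrable _ _)]
  rw [e]
  exact ((hF.integral_hasStrictDerivAt 0 _).hasDerivAt.comp_sub_const x a).sub
    ((hF.integral_hasStrictDerivAt 0 _).hasDerivAt.comp_sub_const x b)

noncomputable def shiftedIntegral (F : ℝ → ℝ) (h ξ : ℝ) : ℝ :=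
  (∫ ς in (0 : ℝ)..h, F (ξ - ς)) - ∫ ς in (-h)..0, F (ξ - ς)

theorem hasDerivAt_shiftedIntegral {F : ℝ → ℝ} (hF : Continuous F) (h ξ : ℝ) :
    HasDerivAt (shiftedIntegral F h) (2 * F ξ - F (ξ + h) - F (ξ - h)) ξ := by
  refine ((hasDerivAt_integral_comp_sub hF 0 h ξ).sub
    (hasDerivAt_integral_comp_sub hF (-h) 0 ξ)).congr_deriv ?_
  rw [sub_zero, sub_neg_eq_add]
  ring

/-- One species' part `c s g(φ/s) + d s (V₁ + V₂)` of the Lyapunov function `L`. -/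
noncomputable def speciesLyapunov (c d s θ : ℝ) (φ : ℝ → ℝ) (ξ : ℝ) : ℝ :=
  c * s * volterraG (φ ξ / s) + d * s *
    (shiftedIntegral (fun x => volterraG (φ x / s)) (sin θ) ξ
      + shiftedIntegral (fun x => volterraG (φ x / s)) (cos θ) ξ)

theorem hasDerivAt_speciesLyapunov (c d θ : ℝ) {s : ℝ} {φ : ℝ → ℝ} (hs : 0 < s)
    (hφ : Differentiable ℝ φ) (hpos : ∀ x, 0 < φ x) (ξ : ℝ) :
    HasDerivAt (speciesLyapunov c d s θ φ)
      ((1 - s / φ ξ) * (c * deriv φ ξ) - d * s * lap θ (fun x => volterraG (φ x / s)) ξ) ξ := by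
  have hG : Continuous fun x => volterraG (φ x / s) :=
    continuous_volterraG_comp (hφ.continuous.div_const s) fun x => (div_pos (hpos x) hs).ne'
  have hg := (hasDerivAt_volterraG (div_pos (hpos ξ) hs).ne').comp ξ
    ((hφ ξ).hasDerivAt.div_const s)
  refine ((hg.const_mul (c * s)).add
    (((hasDerivAt_shiftedIntegral hG (sin θ) ξ).add
      (hasDerivAt_shiftedIntegral hG (cos θ) ξ)).const_mul (d * s))).congr_deriv ?_
  have hφξ := (hpos ξ).ne'
  unfold lap
  field_simp
  ring

theorem deriv_speciesLyapunov_le {c d s θ ξ R : ℝ} {φ : ℝ → ℝ} (hd : 0 ≤ d) (hs : 0 < s)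
    (hφ : Differentiable ℝ φ) (hpos : ∀ x, 0 < φ x) (heq : c * deriv φ ξ = d * lap θ φ ξ + R) :
    deriv (speciesLyapunov c d s θ φ) ξ ≤ (1 - s / φ ξ) * R := by
  have h := mul_le_mul_of_nonneg_left (one_sub_div_mul_lap_le (θ := θ) (ξ := ξ) hs hpos) hd
  rw [(hasDerivAt_speciesLyapunov c d θ hs hφ hpos ξ).deriv, heq]
  linear_combination h

theorem stmt_16_general (Λ β α μ₁ μ₂ d₁ d₂ θ c : ℝ)
    (hβ : 0 < β) (hα : 0 < α) (hμ₁ : 0 < μ₁)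
    (hd₁ : 0 < d₁) (hd₂ : 0 < d₂)
    (Sstar Istar : ℝ) (hSstar : 0 < Sstar) (hIstar : 0 < Istar)
    (heq1 : Λ = β * Sstar * Istar / (1 + α * Istar) + μ₁ * Sstar)
    (heq2 : β * Sstar * Istar / (1 + α * Istar) = μ₂ * Istar)
    (S I : ℝ → ℝ)
    (hSdiff : Differentiable ℝ S) (hIdiff : Differentiable ℝ I)
    (hSpos : ∀ ξ : ℝ, 0 < S ξ) (hIpos : ∀ ξ : ℝ, 0 < I ξ)
    (hSeq : ∀ ξ : ℝ, c * deriv S ξ =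
      d₁ * lap θ S ξ + Λ - β * S ξ * I ξ / (1 + α * I ξ) - μ₁ * S ξ)
    (hIeq : ∀ ξ : ℝ, c * deriv I ξ =
      d₂ * lap θ I ξ + β * S ξ * I ξ / (1 + α * I ξ) - μ₂ * I ξ)
    (L : ℝ → ℝ)
    (hL : ∀ ξ : ℝ, L ξ =
      c * Sstar * volterraG (S ξ / Sstar) + c * Istar * volterraG (I ξ / Istar) +
      d₁ * Sstar *
        (((∫ ς in (0 : ℝ)..Real.sin θ, volterraG (S (ξ - ς) / Sstar)) -
          (∫ ς in (-Real.sin θ)..(0 : ℝ), volterraG (S (ξ - ς) / Sstar))) +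
         ((∫ ς in (0 : ℝ)..Real.cos θ, volterraG (S (ξ - ς) / Sstar)) -
          (∫ ς in (-Real.cos θ)..(0 : ℝ), volterraG (S (ξ - ς) / Sstar)))) +
      d₂ * Istar *
        (((∫ ς in (0 : ℝ)..Real.sin θ, volterraG (I (ξ - ς) / Istar)) -
          (∫ ς in (-Real.sin θ)..(0 : ℝ), volterraG (I (ξ - ς) / Istar))) +
         ((∫ ς in (0 : ℝ)..Real.cos θ, volterraG (I (ξ - ς) / Istar)) -
          (∫ ς in (-Real.cos θ)..(0 : ℝ), volterraG (I (ξ - ς) / Istar))))) :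
    Differentiable ℝ L ∧ ∀ ξ : ℝ, deriv L ξ ≤ 0 := by
  have hL_eq : L = speciesLyapunov c d₁ Sstar θ S + speciesLyapunov c d₂ Istar θ I := by
    funext ξ
    rw [hL ξ]
    simp only [Pi.add_apply, speciesLyapunov, shiftedIntegral]
    ring
  have hS_diff (ξ : ℝ) :=
    (hasDerivAt_speciesLyapunov c d₁ θ hSstar hSdiff hSpos ξ).differentiableAt
  have hI_diff (ξ : ℝ) :=
    (hasDerivAt_speciesLyapunov c d₂ θ hIstar hIdiff hIpos ξ).differentiableAt
  refine ⟨hL_eq ▸ fun ξ => (hS_diff ξ).add (hI_diff ξ), fun ξ => ?_⟩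
  rw [hL_eq, deriv_add (hS_diff ξ) (hI_diff ξ)]
  have hS := deriv_speciesLyapunov_le (R := Λ - β * S ξ * I ξ / (1 + α * I ξ) - μ₁ * S ξ)
    hd₁.le hSstar hSdiff hSpos (by rw [hSeq ξ]; ring)
  have hI := deriv_speciesLyapunov_le (R := β * S ξ * I ξ / (1 + α * I ξ) - μ₂ * I ξ)
    hd₂.le hIstar hIdiff hIpos (by rw [hIeq ξ]; ring)
  have hreaction := endemic_reaction_nonpos hβ.le hα.le hμ₁.le hSstar hIstar (hSpos ξ) (hIpos ξ)
    heq1 heq2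
  linarith

theorem stmt_16 (Λ β α μ₁ μ₂ d₁ d₂ θ c : ℝ)
    (hΛ : 0 < Λ) (hβ : 0 < β) (hα : 0 < α) (hμ₁ : 0 < μ₁) (hμ₂ : 0 < μ₂)
    (hd₁ : 0 < d₁) (hd₂ : 0 < d₂) (hc : 0 < c)
    (Sstar Istar : ℝ) (hSstar : 0 < Sstar) (hIstar : 0 < Istar)
    (heq1 : Λ = β * Sstar * Istar / (1 + α * Istar) + μ₁ * Sstar)
    (heq2 : β * Sstar * Istar / (1 + α * Istar) = μ₂ * Istar)
    (S I : ℝ → ℝ)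
    (hSdiff : Differentiable ℝ S) (hIdiff : Differentiable ℝ I)
    (hSpos : ∀ ξ : ℝ, 0 < S ξ) (hIpos : ∀ ξ : ℝ, 0 < I ξ)
    (hSeq : ∀ ξ : ℝ, c * deriv S ξ =
      d₁ * lap θ S ξ + Λ - β * S ξ * I ξ / (1 + α * I ξ) - μ₁ * S ξ)
    (hIeq : ∀ ξ : ℝ, c * deriv I ξ =
      d₂ * lap θ I ξ + β * S ξ * I ξ / (1 + α * I ξ) - μ₂ * I ξ)
    (L : ℝ → ℝ)
    (hL : ∀ ξ : ℝ, L ξ =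
      c * Sstar * volterraG (S ξ / Sstar) + c * Istar * volterraG (I ξ / Istar) +
      d₁ * Sstar *
        (((∫ ς in (0 : ℝ)..Real.sin θ, volterraG (S (ξ - ς) / Sstar)) -
          (∫ ς in (-Real.sin θ)..(0 : ℝ), volterraG (S (ξ - ς) / Sstar))) +
         ((∫ ς in (0 : ℝ)..Real.cos θ, volterraG (S (ξ - ς) / Sstar)) -
          (∫ ς in (-Real.cos θ)..(0 : ℝ), volterraG (S (ξ - ς) / Sstar)))) +
      d₂ * Istar *
        (((∫ ς in (0 : ℝ)..Real.sin θ, volterraG (I (ξ - ς) / Istar)) -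
          (∫ ς in (-Real.sin θ)..(0 : ℝ), volterraG (I (ξ - ς) / Istar))) +
         ((∫ ς in (0 : ℝ)..Real.cos θ, volterraG (I (ξ - ς) / Istar)) -
          (∫ ς in (-Real.cos θ)..(0 : ℝ), volterraG (I (ξ - ς) / Istar))))) :
    Differentiable ℝ L ∧ ∀ ξ : ℝ, deriv L ξ ≤ 0 :=
  stmt_16_general Λ β α μ₁ μ₂ d₁ d₂ θ c hβ hα hμ₁ hd₁ hd₂ Sstar Istar hSstar hIstar heq1 heq2 S I
    hSdiff hIdiff hSpos hIpos hSeq hIeq L hL
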